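/- arXiv:1912.04582 — 2 statements merged into one kernel-verified Lean document; each statement's English description precedes it below -/
import Mathlib

section
/- Eckart–Young theorem (Frobenius norm): Let A be an m×n real matrix with singular value decomposition A = Σ_{k=1}^{r} σ_k u_k v_kᵀ, σ_1 ≥ σ_2 ≥ ⋯ ≥ σ_r > 0. For any r' < r, the matrix B = Σ_{k=1}^{r'} σ_k u_k v_kᵀ minimizes ‖A - X‖_F over all matrices X of rank at most r', and min ‖A - X‖_F² = Σ_{k=r'+1}^{r} σ_k². -/
/-!
Let `W` be the row space of `X`, so that `dim W = rank X ≤ r'`, and let `P` be the orthogonal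
projection onto `Wᗮ`. Since `P` kills the rows of `X` and does not increase norms,
`‖A - X‖_F² ≥ ‖A P‖_F² = Σ_k σ_k² t_k` with `t_k = ‖P v_k‖² ∈ [0, 1]`. Bessel's inequality for an
orthonormal basis of `W` gives `Σ_k (1 - t_k) = Σ_k ‖P_W v_k‖² ≤ dim W ≤ r'`, and against
nonincreasing weights `σ_k²` such coefficients `t_k` collect at least the tail `Σ_{k ≥ r'} σ_k²`,
which is `‖A - B‖_F²` by orthonormality of the `u_k` and of the `v_k`.
-/

open Matrix

def frobSq {m n : ℕ} (M : Matrix (Fin m) (Fin n) ℝ) : ℝ :=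
  ∑ i, ∑ j, (M i j) ^ 2

open Finset Module
open scoped RealInnerProductSpace

theorem orthonormal_toLp_iff {ι κ : Type*} [Fintype κ] [DecidableEq ι] {u : ι → κ → ℝ} :
    Orthonormal ℝ (fun k => WithLp.toLp 2 (u k)) ↔
      ∀ k l, ∑ i, u k i * u l i = if k = l then 1 else 0 := by
  simp only [orthonormal_iff_ite, EuclideanSpace.inner_toLp_toLp, dotProduct, star_trivial,
    mul_comm]

theorem Orthonormal.sum_norm_sq_starProjection_le_finrank {ι E : Type*} [Fintype ι]
    [NormedAddCommGroup E] [InnerProductSpace ℝ E] {v : ι → E} (hv : Orthonormal ℝ v)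
    (K : Submodule ℝ E) [FiniteDimensional ℝ K] :
    ∑ k, ‖K.starProjection (v k)‖ ^ 2 ≤ finrank ℝ K := by
  let b := stdOrthonormalBasis ℝ K
  have hproj (x : E) : ‖K.starProjection x‖ ^ 2 = ∑ i, ⟪x, b i⟫ ^ 2 := by
    rw [Submodule.starProjection_apply, Submodule.norm_coe, ← b.sum_sq_inner_right]
    simp_rw [Submodule.inner_orthogonalProjectionOnto_eq_of_mem_left, real_inner_comm]
  calc ∑ k, ‖K.starProjection (v k)‖ ^ 2 = ∑ i, ∑ k, ‖⟪v k, (b i : E)⟫‖ ^ 2 := by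
        simp_rw [hproj, Real.norm_eq_abs, sq_abs]
        exact sum_comm
    _ ≤ ∑ i, ‖(b i : E)‖ ^ 2 := sum_le_sum fun i _ => hv.sum_inner_products_le _
    _ = finrank ℝ K := by simp [Submodule.norm_coe, b.orthonormal.1]

theorem Orthonormal.sum_norm_sq_sum_smul {ι κ E : Type*} [Fintype ι] [Fintype κ] [DecidableEq ι]
    [NormedAddCommGroup E] [InnerProductSpace ℝ E] {u : ι → κ → ℝ}
    (hu : Orthonormal ℝ (fun k => WithLp.toLp 2 (u k))) (y : ι → E) :
    ∑ p, ‖∑ k, u k p • y k‖ ^ 2 = ∑ k, ‖y k‖ ^ 2 := by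
  have hu' := orthonormal_toLp_iff.1 hu
  calc ∑ p, ‖∑ k, u k p • y k‖ ^ 2
      = ∑ k, ∑ l, (∑ p, u k p * u l p) * ⟪y k, y l⟫ := by
        simp_rw [← real_inner_self_eq_norm_sq, sum_inner, inner_sum, real_inner_smul_left,
          real_inner_smul_right, sum_mul]
        rw [sum_comm]
        refine sum_congr rfl fun k _ => ?_
        rw [sum_comm]
        refine sum_congr rfl fun l _ => sum_congr rfl fun p _ => by ring
    _ = ∑ k, ‖y k‖ ^ 2 := by simp [hu']

theorem sum_tail_le_sum_mul_of_sum_one_sub_le {r a : ℕ} (ha : a < r) {s t : Fin r → ℝ}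
    (hs : Antitone s) (hs0 : ∀ k, 0 ≤ s k) (ht0 : ∀ k, 0 ≤ t k) (ht1 : ∀ k, t k ≤ 1)
    (hsum : ∑ k, (1 - t k) ≤ a) :
    ∑ k : Fin r, (if a ≤ (k : ℕ) then s k else 0) ≤ ∑ k, s k * t k := by
  -- the threshold between the `a` largest weights and the others
  set c := s ⟨a, ha⟩
  have hpoint (k : Fin r) :
      (if a ≤ (k : ℕ) then s k else 0) - s k * t k ≤
        c * ((1 - t k) - if (k : ℕ) < a then 1 else 0) := by
    by_cases hk : a ≤ (k : ℕ)
    · have : s k ≤ c := hs (Fin.le_def.2 hk)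
      simp only [hk, if_true, not_lt.2 hk, if_false]
      nlinarith [ht1 k]
    · have : c ≤ s k := hs (Fin.le_def.2 (Nat.le_of_not_le hk))
      simp only [hk, if_false, not_le.1 hk, if_true]
      nlinarith [ht0 k]
  have hcard : ∑ k : Fin r, (if (k : ℕ) < a then (1 : ℝ) else 0) = a := by
    rw [sum_boole, Fin.card_filter_val_lt, min_eq_right ha.le]
  have := sum_le_sum fun k (_ : k ∈ univ) => hpoint k
  rw [sum_sub_distrib, ← mul_sum, sum_sub_distrib, hcard] at this
  nlinarith [hs0 ⟨a, ha⟩]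

theorem frobSq_eq_sum_norm_sq_row {m n : ℕ} (M : Matrix (Fin m) (Fin n) ℝ) :
    frobSq M = ∑ i, ‖WithLp.toLp 2 (M i)‖ ^ 2 := by
  simp [frobSq, EuclideanSpace.real_norm_sq_eq]

theorem toLp_row_eq_sum_smul {m n r : ℕ} {M : Matrix (Fin m) (Fin n) ℝ} {c : Fin r → ℝ}
    {u : Fin r → Fin m → ℝ} {v : Fin r → Fin n → ℝ}
    (hM : ∀ i j, M i j = ∑ k, c k * u k i * v k j) (i : Fin m) :
    WithLp.toLp 2 (M i) = ∑ k, u k i • c k • WithLp.toLp 2 (v k) := by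
  ext j
  simp [hM, mul_left_comm, mul_assoc]

theorem frobSq_eq_sum_sq {m n r : ℕ} {M : Matrix (Fin m) (Fin n) ℝ} {c : Fin r → ℝ}
    {u : Fin r → Fin m → ℝ} {v : Fin r → Fin n → ℝ}
    (hu : Orthonormal ℝ (fun k => WithLp.toLp 2 (u k)))
    (hv : Orthonormal ℝ (fun k => WithLp.toLp 2 (v k)))
    (hM : ∀ i j, M i j = ∑ k, c k * u k i * v k j) :
    frobSq M = ∑ k, c k ^ 2 := by
  simp_rw [frobSq_eq_sum_norm_sq_row, toLp_row_eq_sum_smul hM, hu.sum_norm_sq_sum_smul,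
    norm_smul, hv.1, mul_one, Real.norm_eq_abs, sq_abs]

theorem finrank_span_toLp_row_eq_rank {m n : ℕ} (M : Matrix (Fin m) (Fin n) ℝ) :
    finrank ℝ (Submodule.span ℝ (Set.range fun i => WithLp.toLp 2 (M i))) = M.rank := by
  rw [rank_eq_finrank_span_row, ← (WithLp.linearEquiv 2 ℝ (Fin n → ℝ)).symm.finrank_map_eq,
    Submodule.map_span, ← Set.range_comp]
  rfl

theorem rank_le_card_of_eq_sum {m n r : ℕ} {M : Matrix (Fin m) (Fin n) ℝ} {c : Fin r → ℝ}
    {u : Fin r → Fin m → ℝ} {v : Fin r → Fin n → ℝ}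
    (hM : ∀ i j, M i j = ∑ k, c k * u k i * v k j) (s : Finset (Fin r))
    (hc : ∀ k ∉ s, c k = 0) :
    M.rank ≤ s.card := by
  classical
  let S := s.image fun k => WithLp.toLp 2 (v k)
  have hrow (i : Fin m) : WithLp.toLp 2 (M i) ∈ Submodule.span ℝ (S : Set _) := by
    rw [toLp_row_eq_sum_smul hM]
    refine Submodule.sum_mem _ fun k _ => ?_
    by_cases hk : k ∈ s
    · exact Submodule.smul_mem _ _ (Submodule.smul_mem _ _
        (Submodule.subset_span (mem_coe.2 (mem_image_of_mem _ hk))))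
    · simp [hc k hk]
  calc M.rank = finrank ℝ (Submodule.span ℝ (Set.range fun i => WithLp.toLp 2 (M i))) :=
        (finrank_span_toLp_row_eq_rank M).symm
    _ ≤ finrank ℝ (Submodule.span ℝ (S : Set _)) :=
        Submodule.finrank_mono (Submodule.span_le.2 (Set.range_subset_iff.2 hrow))
    _ ≤ S.card := finrank_span_finset_le_card S
    _ ≤ s.card := card_image_le

theorem sum_sq_mul_norm_sq_starProjection_le_frobSq_sub {m n r : ℕ}
    {A X : Matrix (Fin m) (Fin n) ℝ} {σ : Fin r → ℝ}
    {u : Fin r → Fin m → ℝ} {v : Fin r → Fin n → ℝ}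
    (hu : Orthonormal ℝ (fun k => WithLp.toLp 2 (u k)))
    (hA : ∀ i j, A i j = ∑ k, σ k * u k i * v k j)
    (W : Submodule ℝ (EuclideanSpace ℝ (Fin n))) (hX : ∀ i, WithLp.toLp 2 (X i) ∈ W) :
    ∑ k, σ k ^ 2 * ‖Wᗮ.starProjection (WithLp.toLp 2 (v k))‖ ^ 2 ≤ frobSq (A - X) := by
  set P := Wᗮ.starProjection
  have hrow (i : Fin m) :
      P (WithLp.toLp 2 ((A - X) i)) = ∑ k, u k i • σ k • P (WithLp.toLp 2 (v k)) := by
    rw [show (A - X) i = A i - X i from rfl, WithLp.toLp_sub, map_sub,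
      Submodule.starProjection_orthogonal_apply_eq_zero (hX i), sub_zero,
      toLp_row_eq_sum_smul hA, map_sum]
    simp only [map_smul]
  calc ∑ k, σ k ^ 2 * ‖P (WithLp.toLp 2 (v k))‖ ^ 2
      = ∑ i, ‖P (WithLp.toLp 2 ((A - X) i))‖ ^ 2 := by
        simp only [hrow, hu.sum_norm_sq_sum_smul, norm_smul, mul_pow, Real.norm_eq_abs, sq_abs]
    _ ≤ ∑ i, ‖WithLp.toLp 2 ((A - X) i)‖ ^ 2 := sum_le_sum fun i _ =>
        pow_le_pow_left₀ (norm_nonneg _) (W.orthogonal.norm_starProjection_apply_le _) 2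
    _ = frobSq (A - X) := (frobSq_eq_sum_norm_sq_row _).symm

theorem sum_tail_sq_le_frobSq_sub {m n r : ℕ} {A X : Matrix (Fin m) (Fin n) ℝ}
    {σ : Fin r → ℝ} (hσ0 : ∀ k, 0 ≤ σ k) (hσ : Antitone σ)
    {u : Fin r → Fin m → ℝ} {v : Fin r → Fin n → ℝ}
    (hu : Orthonormal ℝ (fun k => WithLp.toLp 2 (u k)))
    (hv : Orthonormal ℝ (fun k => WithLp.toLp 2 (v k)))
    (hA : ∀ i j, A i j = ∑ k, σ k * u k i * v k j) {a : ℕ} (ha : a < r) (hX : X.rank ≤ a) :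
    ∑ k : Fin r, (if a ≤ (k : ℕ) then σ k ^ 2 else 0) ≤ frobSq (A - X) := by
  set W := Submodule.span ℝ (Set.range fun i => WithLp.toLp 2 (X i))
  have hpyth (k : Fin r) : ‖Wᗮ.starProjection (WithLp.toLp 2 (v k))‖ ^ 2
      = 1 - ‖W.starProjection (WithLp.toLp 2 (v k))‖ ^ 2 := by
    have := W.norm_sq_eq_add_norm_sq_starProjection (WithLp.toLp 2 (v k))
    rw [hv.1 k, one_pow] at this
    linarith
  calc _ ≤ ∑ k, σ k ^ 2 * ‖Wᗮ.starProjection (WithLp.toLp 2 (v k))‖ ^ 2 := by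
        refine sum_tail_le_sum_mul_of_sum_one_sub_le ha
          (fun k l hkl => pow_le_pow_left₀ (hσ0 l) (hσ hkl) 2)
          (fun k => sq_nonneg _) (fun k => sq_nonneg _) (fun k => ?_) ?_
        · rw [hpyth]
          linarith [sq_nonneg ‖W.starProjection (WithLp.toLp 2 (v k))‖]
        · simp only [hpyth, sub_sub_cancel]
          exact (hv.sum_norm_sq_starProjection_le_finrank W).trans
            (by exact_mod_cast (finrank_span_toLp_row_eq_rank X).trans_le hX)
    _ ≤ frobSq (A - X) :=
        sum_sq_mul_norm_sq_starProjection_le_frobSq_sub hu hA W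
          fun i => Submodule.subset_span ⟨i, rfl⟩

/-- **Eckart–Young theorem (Frobenius norm).** Let `A = Σ_{k<r} σ_k u_k v_kᵀ`
be an SVD with `σ_1 ≥ ⋯ ≥ σ_r > 0` and orthonormal `u_k`, `v_k`. For `r' < r`,
the truncation `B = Σ_{k<r'} σ_k u_k v_kᵀ` has rank at most `r'`, minimizes the
Frobenius distance to `A` among all matrices of rank at most `r'`, and
`‖A - B‖_F² = Σ_{k≥r'} σ_k²`. -/
theorem eckart_young (m n r : ℕ) (σ : Fin r → ℝ)
    (hσpos : ∀ k, 0 < σ k)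
    (hσmono : ∀ k l : Fin r, k ≤ l → σ l ≤ σ k)
    (u : Fin r → Fin m → ℝ) (v : Fin r → Fin n → ℝ)
    (hu : ∀ k l : Fin r, (∑ i, u k i * u l i) = if k = l then 1 else 0)
    (hv : ∀ k l : Fin r, (∑ j, v k j * v l j) = if k = l then 1 else 0)
    (A B : Matrix (Fin m) (Fin n) ℝ)
    (hA : ∀ i j, A i j = ∑ k : Fin r, σ k * u k i * v k j)
    (r' : ℕ) (hr' : r' < r)
    (hB : ∀ i j, B i j = ∑ k : Fin r, if (k : ℕ) < r' then σ k * u k i * v k j else 0) :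
    B.rank ≤ r' ∧
    (∀ X : Matrix (Fin m) (Fin n) ℝ, X.rank ≤ r' →
      frobSq (A - B) ≤ frobSq (A - X)) ∧
    frobSq (A - B) = ∑ k : Fin r, if r' ≤ (k : ℕ) then σ k ^ 2 else 0 := by
  have hu' := orthonormal_toLp_iff.2 hu
  have hv' := orthonormal_toLp_iff.2 hv
  have hB' (i j) :
      B i j = ∑ k : Fin r, (if (k : ℕ) < r' then σ k else 0) * u k i * v k j := by
    simp only [hB, ite_mul, zero_mul]
  have hAB (i j) :
      (A - B) i j = ∑ k : Fin r, (if r' ≤ (k : ℕ) then σ k else 0) * u k i * v k j := by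
    rw [Matrix.sub_apply, hA, hB, ← sum_sub_distrib]
    refine sum_congr rfl fun k _ => ?_
    split_ifs <;> first | omega | ring
  have hfrob : frobSq (A - B) = ∑ k : Fin r, if r' ≤ (k : ℕ) then σ k ^ 2 else 0 := by
    simp only [frobSq_eq_sum_sq hu' hv' hAB, ite_pow, zero_pow two_ne_zero]
  refine ⟨?_, fun X hX => ?_, hfrob⟩
  · calc B.rank ≤ #{k : Fin r | (k : ℕ) < r'} :=
          rank_le_card_of_eq_sum hB' _ fun k hk => if_neg (by simpa using hk)
      _ = r' := by rw [Fin.card_filter_val_lt, min_eq_right hr'.le]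
  rw [hfrob]
  exact sum_tail_sq_le_frobSq_sub (fun k => (hσpos k).le) (fun k l hkl => hσmono k l hkl)
    hu' hv' hA hr' hX
end

section
/- The 3D tensor |ξ̂_n| with entries |n_1 ξ_1(i) + n_2 ξ_2(j) + n_3 ξ_3(k)| on a symmetric grid ξ_α(i) = -ξ_max + (i-1)Δξ generically has unfolding rank growing with the grid size: specifically, for n = (1,1,0)/√2 and the grid {−(N−1)/2,…,(N−1)/2}·Δξ in each direction, the N×N matrix M(i,j) = |ξ(i) + ξ(j)| has rank at least N/2. -/
/-!
Up to the positive factor `Δξ / √2`, `M` is the Hankel matrix `A i j = |i + j + 1 - N|`.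
On the integers, `|·|` has second difference `2 δ₀`, so combining three adjacent columns
`j - 1, j, j + 1` of `A` with weights `1, -2, 1` gives `2 e_k` for `k = N - 1 - j`. Hence the
range of `A` contains `e_1, …, e_{N-2}` and `rank A ≥ N - 2`; this is at least `N / 2` once `N ≥ 4`,
and for `N = 2, 3` it suffices that `A ≠ 0`.
-/

open Matrix

theorem abs_intCast_second_difference (m : ℤ) :
    |(m : ℝ) - 1| - 2 * |(m : ℝ)| + |(m : ℝ) + 1| = if m = 0 then 2 else 0 := by
  rcases lt_trichotomy m 0 with hm | rfl | hm
  · have hm' : (m : ℝ) ≤ -1 := by exact_mod_cast Int.le_sub_one_of_lt hm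
    rw [if_neg hm.ne, abs_of_neg (by linarith), abs_of_neg (by linarith),
      abs_of_nonpos (by linarith)]
    ring
  · norm_num
  · have hm' : (1 : ℝ) ≤ m := by exact_mod_cast hm
    rw [if_neg hm.ne', abs_of_nonneg (by linarith), abs_of_pos (by linarith),
      abs_of_pos (by linarith)]
    ring

namespace Matrix

variable {m n K : Type*} [Fintype n] [Field K]

theorem card_le_rank_of_single_mem_range [Fintype m] [DecidableEq m] {ι : Type*} [Fintype ι]
    (A : Matrix m n K) {f : ι → m} (hf : f.Injective)
    (h : ∀ a, Pi.single (f a) 1 ∈ LinearMap.range A.mulVecLin) :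
    Fintype.card ι ≤ A.rank :=
  LinearIndependent.fintype_card_le_finrank (b := fun a => ⟨_, h a⟩) <|
    .of_comp (LinearMap.range A.mulVecLin).subtype <|
      (Pi.linearIndependent_single_one m K).comp f hf

theorem rank_pos_of_ne_zero [Finite m] [DecidableEq n] {A : Matrix m n K} (hA : A ≠ 0) :
    0 < A.rank := by
  refine Nat.pos_of_ne_zero fun h => hA ?_
  rw [rank, Submodule.finrank_eq_zero, LinearMap.range_eq_bot, ← toLin'_apply'] at h
  exact toLin'.map_eq_zero_iff.mp h

end Matrix

/-- `|ξ(i) + ξ(j)| / Δξ` on the symmetric grid `ξ(i) = (i - (N+1)/2) Δξ`, with `Fin N` indices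
starting at `0`. -/
def absHankel (N : ℕ) : Matrix (Fin N) (Fin N) ℝ :=
  of fun i j => |(i : ℝ) + j + 1 - N|

theorem absHankel_ne_zero {N : ℕ} (hN : 2 ≤ N) : absHankel N ≠ 0 := by
  intro h
  have h00 := congrFun (congrFun h ⟨0, by omega⟩) ⟨0, by omega⟩
  have hN' : (2 : ℝ) ≤ N := by exact_mod_cast hN
  simp only [absHankel, of_apply, Nat.cast_zero, Matrix.zero_apply, abs_eq_zero] at h00
  linarith

theorem single_mem_range_absHankel {N : ℕ} (k : Fin N) (hk₀ : 1 ≤ (k : ℕ)) (hk : (k : ℕ) + 2 ≤ N) :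
    Pi.single k 1 ∈ LinearMap.range (absHankel N).mulVecLin := by
  set j := N - 1 - (k : ℕ) with hj
  refine ⟨(2 : ℝ)⁻¹ • (Pi.single ⟨j - 1, by omega⟩ 1 - Pi.single ⟨j, by omega⟩ 2 +
    Pi.single ⟨j + 1, by omega⟩ 1), ?_⟩
  funext i
  have hcol (c : ℕ) (hc : c < N) (x : ℝ) :
      (absHankel N *ᵥ Pi.single ⟨c, hc⟩ x) i = |(i : ℝ) + c + 1 - N| * x := by
    simp [mulVec_single, absHankel]
  simp only [mulVecLin_apply, mulVec_smul, mulVec_add, mulVec_sub, Pi.smul_apply, Pi.add_apply,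
    Pi.sub_apply, hcol, smul_eq_mul]
  have hjk : (j : ℝ) + k + 1 = N := by exact_mod_cast (by omega : j + k + 1 = N)
  have hs : (i : ℝ) + j + 1 - N = ((i - k : ℤ) : ℝ) := by push_cast; linarith
  have hik : (i : ℤ) - k = 0 ↔ i = k := by rw [Fin.ext_iff]; omega
  push_cast [Nat.cast_sub (by omega : 1 ≤ j)]
  rw [show (i : ℝ) + (j - 1) + 1 - N = ((i - k : ℤ) : ℝ) - 1 by linarith,
    show (i : ℝ) + (j + 1) + 1 - N = ((i - k : ℤ) : ℝ) + 1 by linarith, hs, mul_one, mul_one,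
    mul_comm _ (2 : ℝ), abs_intCast_second_difference, Pi.single_apply]
  simp only [hik]
  split_ifs <;> norm_num

theorem sub_two_le_rank_absHankel (N : ℕ) : N - 2 ≤ (absHankel N).rank := by
  simpa using card_le_rank_of_single_mem_range (absHankel N)
    (f := fun a : Fin (N - 2) => (⟨a + 1, by omega⟩ : Fin N))
    (fun a b hab => Fin.ext (by simpa using hab))
    (fun a => single_mem_range_absHankel _ (by simp) (by simp; omega))

theorem half_le_rank_absHankel (N : ℕ) : N / 2 ≤ (absHankel N).rank := by
  rcases lt_or_ge N 2 with hN | hN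
  · simp [Nat.div_eq_of_lt hN]
  · have := rank_pos_of_ne_zero (absHankel_ne_zero hN)
    have := sub_two_le_rank_absHankel N
    omega

/-- **The |ξ̂_n| tensor has large unfolding rank.** For the normal
`n = (1,1,0)/√2` and the symmetric grid `ξ(i) = (i - (N+1)/2)Δξ`, `i = 1,…,N`,
the `N×N` unfolding matrix `M(i,j) = |ξ(i) + ξ(j)|/√2` has rank at least `N/2`;
hence `|ξ̂_n|` cannot be represented exactly with small TT-ranks. -/
theorem abs_xi_n_matrix_rank_ge (N : ℕ) (Δξ : ℝ) (hΔξ : 0 < Δξ)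
    (M : Matrix (Fin N) (Fin N) ℝ)
    (hM : ∀ i j : Fin N, M i j = (Real.sqrt 2)⁻¹ *
      |(((i : ℝ) + 1) - ((N : ℝ) + 1) / 2) * Δξ +
        (((j : ℝ) + 1) - ((N : ℝ) + 1) / 2) * Δξ|) :
    N / 2 ≤ M.rank := by
  have hM' : M = ((Real.sqrt 2)⁻¹ * Δξ) • absHankel N := by
    ext i j
    have hsum : (((i : ℝ) + 1) - ((N : ℝ) + 1) / 2) * Δξ + (((j : ℝ) + 1) - ((N : ℝ) + 1) / 2) * Δξ
        = ((i : ℝ) + j + 1 - N) * Δξ := by ring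
    rw [hM, hsum, abs_mul, abs_of_pos hΔξ, Matrix.smul_apply, absHankel, of_apply, smul_eq_mul]
    ring
  rw [hM', rank_smul_of_mem_nonZeroDivisors _ (mem_nonZeroDivisors_of_ne_zero (by positivity))]
  exact half_le_rank_absHankel N
end
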